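/- Let (M,d) be a metric space, K ⊆ ℝ a nonempty compact set, and γ : K → M a Lipschitz map. Then the image γ(K) is null for the Hausdorff 1-measure computed with respect to the pseudometric d_ur; equivalently, for every ε > 0 there is a countable family of sets (Eᵢ) covering γ(K) with Σᵢ sup_{x,y ∈ Eᵢ} d_ur(x,y) < ε. -/

import Mathlib

open Metric Set MeasureTheory
open scoped ENNReal NNReal Pointwise

/-- The pseudometric `d_ur`: `d_ur(x,y)` is the infimum of `λ([min K, max K] ∖ K)` over all
nonempty compact `K ⊆ ℝ` and 1-Lipschitz maps `γ : K → M` with `γ(min K) = x` and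
`γ(max K) = y`. -/
noncomputable def dur {M : Type*} [MetricSpace M] (x y : M) : ℝ :=
  sInf { c : ℝ | ∃ (K : Set ℝ) (γ : ℝ → M), K.Nonempty ∧ IsCompact K ∧
    LipschitzOnWith 1 γ K ∧ γ (sInf K) = x ∧ γ (sSup K) = y ∧
    c = (volume (Set.Icc (sInf K) (sSup K) \ K)).toReal }

/-- The diameter of a set with respect to the pseudometric `d_ur`, as an extended
nonnegative real. -/
noncomputable def durDiam {M : Type*} [MetricSpace M] (E : Set M) : ℝ≥0∞ :=
  ⨆ (x) (_ : x ∈ E) (y) (_ : y ∈ E), ENNReal.ofReal (dur x y)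

lemma durSet_subset {M : Type*} [MetricSpace M] (x y : M) :
    { c : ℝ | ∃ (K : Set ℝ) (γ : ℝ → M), K.Nonempty ∧ IsCompact K ∧
      LipschitzOnWith 1 γ K ∧ γ (sInf K) = x ∧ γ (sSup K) = y ∧
      c = (volume (Set.Icc (sInf K) (sSup K) \ K)).toReal } ⊆
    { c : ℝ | ∃ (K : Set ℝ) (γ : ℝ → M), K.Nonempty ∧ IsCompact K ∧
      LipschitzOnWith 1 γ K ∧ γ (sInf K) = y ∧ γ (sSup K) = x ∧
      c = (volume (Set.Icc (sInf K) (sSup K) \ K)).toReal } := by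
  rintro c ⟨K, γ, hne, hc, hlip, hx, hy, rfl⟩
  have hinj : Function.Injective (fun u : ℝ => (-1 : ℝ) • u) := fun a b h => by
    simpa using h
  have hmem : ∀ v ∈ (-1 : ℝ) • K, -v ∈ K := by
    rintro v ⟨u, hu, rfl⟩; simpa using hu
  have hInf : sInf ((-1 : ℝ) • K) = -sSup K := by
    rw [Real.sInf_smul_of_nonpos (by norm_num)]; simp
  have hSup : sSup ((-1 : ℝ) • K) = -sInf K := by
    rw [Real.sSup_smul_of_nonpos (by norm_num)]; simp
  refine ⟨(-1 : ℝ) • K, fun v => γ (-v), hne.smul_set, hc.smul _, ?_, ?_, ?_, ?_⟩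
  · rw [lipschitzOnWith_iff_dist_le_mul]
    intro v hv w hw
    have := lipschitzOnWith_iff_dist_le_mul.mp hlip (-v) (hmem v hv) (-w) (hmem w hw)
    simpa [Real.dist_eq, abs_sub_comm, neg_sub_neg] using this
  · simp only [hInf, neg_neg, hy]
  · simp only [hSup, neg_neg, hx]
  · have hIcc : Icc (sInf ((-1:ℝ) • K)) (sSup ((-1:ℝ) • K)) = (-1 : ℝ) • Icc (sInf K) (sSup K) := by
      rw [hInf, hSup]
      ext u
      simp only [Set.mem_smul_set, smul_eq_mul, neg_one_mul, mem_Icc]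
      constructor
      · rintro ⟨hu1, hu2⟩
        exact ⟨-u, ⟨by linarith, by linarith⟩, by ring⟩
      · rintro ⟨w, ⟨hw1, hw2⟩, rfl⟩
        constructor <;> linarith
    have hdiff : Icc (sInf ((-1:ℝ) • K)) (sSup ((-1:ℝ) • K)) \ ((-1 : ℝ) • K)
        = (-1 : ℝ) • (Icc (sInf K) (sSup K) \ K) := by
      rw [hIcc]
      have h1 : ((-1 : ℝ) • (Icc (sInf K) (sSup K) \ K) : Set ℝ)
          = (fun u : ℝ => (-1 : ℝ) • u) '' (Icc (sInf K) (sSup K) \ K) := rfl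
      have h2 : ((-1 : ℝ) • Icc (sInf K) (sSup K) : Set ℝ)
          = (fun u : ℝ => (-1 : ℝ) • u) '' Icc (sInf K) (sSup K) := rfl
      have h3 : ((-1 : ℝ) • K : Set ℝ) = (fun u : ℝ => (-1 : ℝ) • u) '' K := rfl
      rw [h1, h2, h3, Set.image_diff hinj]
    rw [hdiff, Measure.addHaar_smul]
    simp

lemma dur_symm {M : Type*} [MetricSpace M] (x y : M) : dur x y = dur y x := by
  unfold dur
  rw [Set.Subset.antisymm (durSet_subset x y) (durSet_subset y x)]

lemma durSet_bddBelow {M : Type*} [MetricSpace M] (x y : M) :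
    BddBelow { c : ℝ | ∃ (K : Set ℝ) (γ : ℝ → M), K.Nonempty ∧ IsCompact K ∧
      LipschitzOnWith 1 γ K ∧ γ (sInf K) = x ∧ γ (sSup K) = y ∧
      c = (volume (Set.Icc (sInf K) (sSup K) \ K)).toReal } := by
  refine ⟨0, ?_⟩
  rintro c ⟨K, γ, -, -, -, -, -, rfl⟩
  exact ENNReal.toReal_nonneg

lemma dur_le_lip {M : Type*} [MetricSpace M] {K : Set ℝ} {γ : ℝ → M} {N : ℝ≥0}
    (hN : 1 ≤ N) (hKc : IsCompact K) (hγ : LipschitzOnWith N γ K)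
    {s t : ℝ} (hs : s ∈ K) (ht : t ∈ K) (hst : s ≤ t) :
    dur (γ s) (γ t) ≤ (N : ℝ) * (volume (Icc s t \ K)).toReal := by
  set c : ℝ := (N : ℝ) with hcdef
  have hc0 : 0 < c := lt_of_lt_of_le one_pos (by exact_mod_cast hN)
  set K₁ : Set ℝ := K ∩ Icc s t with hK₁def
  have hsK₁ : s ∈ K₁ := ⟨hs, le_refl s, hst⟩
  have htK₁ : t ∈ K₁ := ⟨ht, hst, le_refl t⟩
  have hK₁c : IsCompact K₁ := hKc.inter_right isClosed_Icc
  have hInf₁ : sInf K₁ = s := IsLeast.csInf_eq ⟨hsK₁, fun u hu => hu.2.1⟩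
  have hSup₁ : sSup K₁ = t := IsGreatest.csSup_eq ⟨htK₁, fun u hu => hu.2.2⟩
  set K' : Set ℝ := c • K₁ with hK'def
  have hInf' : sInf K' = c * s := by
    rw [hK'def, Real.sInf_smul_of_nonneg hc0.le, hInf₁, smul_eq_mul]
  have hSup' : sSup K' = c * t := by
    rw [hK'def, Real.sSup_smul_of_nonneg hc0.le, hSup₁, smul_eq_mul]
  have hdiv : ∀ v ∈ K', v / c ∈ K₁ := by
    rintro v ⟨u, hu, rfl⟩
    simpa [smul_eq_mul, mul_div_cancel_left₀ _ hc0.ne'] using hu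
  have hinj : Function.Injective (fun u : ℝ => c • u) := fun a b h => by
    simp only [smul_eq_mul] at h
    exact mul_left_cancel₀ hc0.ne' h
  have hlip : LipschitzOnWith 1 (fun v => γ (v / c)) K' := by
    rw [lipschitzOnWith_iff_dist_le_mul]
    intro v hv w hw
    have h1 := lipschitzOnWith_iff_dist_le_mul.mp hγ (v / c) (hdiv v hv).1 (w / c) (hdiv w hw).1
    have h2 : dist (v / c) (w / c) = dist v w / c := by
      rw [Real.dist_eq, Real.dist_eq, ← sub_div, abs_div, abs_of_pos hc0]
    rw [h2] at h1
    calc dist (γ (v / c)) (γ (w / c)) ≤ (N : ℝ) * (dist v w / c) := h1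
      _ = dist v w := by rw [← hcdef]; field_simp
      _ = (1 : ℝ≥0) * dist v w := by simp
  have hIcc : Icc (c * s) (c * t) = c • Icc s t := by
    rw [LinearOrderedField.smul_Icc hc0]
  have hdiff : Icc (sInf K') (sSup K') \ K' = c • (Icc s t \ K₁) := by
    rw [hInf', hSup', hIcc, hK'def]
    have h1 : (c • (Icc s t \ K₁) : Set ℝ) = (fun u : ℝ => c • u) '' (Icc s t \ K₁) := rfl
    have h2 : (c • Icc s t : Set ℝ) = (fun u : ℝ => c • u) '' Icc s t := rfl
    have h3 : (c • K₁ : Set ℝ) = (fun u : ℝ => c • u) '' K₁ := rfl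
    rw [h1, h2, h3, Set.image_diff hinj]
  have hdiff2 : Icc s t \ K₁ = Icc s t \ K := by
    ext u
    simp only [hK₁def, mem_diff, mem_inter_iff, not_and]
    tauto
  have hvol : volume (Icc (sInf K') (sSup K') \ K') = ENNReal.ofReal c * volume (Icc s t \ K) := by
    rw [hdiff, hdiff2, Measure.addHaar_smul]
    simp [abs_of_pos hc0]
  have hmem : ((volume (Icc (sInf K') (sSup K') \ K')).toReal) ∈
      { c : ℝ | ∃ (K : Set ℝ) (γ' : ℝ → M), K.Nonempty ∧ IsCompact K ∧
        LipschitzOnWith 1 γ' K ∧ γ' (sInf K) = γ s ∧ γ' (sSup K) = γ t ∧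
        c = (volume (Set.Icc (sInf K) (sSup K) \ K)).toReal } := by
    refine ⟨K', fun v => γ (v / c), ⟨c * s, Set.smul_mem_smul_set hsK₁⟩, hK₁c.smul c, hlip, ?_, ?_, rfl⟩
    · rw [hInf']
      show γ (c * s / c) = γ s
      rw [mul_div_cancel_left₀ _ hc0.ne']
    · rw [hSup']
      show γ (c * t / c) = γ t
      rw [mul_div_cancel_left₀ _ hc0.ne']
  have hle := csInf_le (durSet_bddBelow (γ s) (γ t)) hmem
  refine le_trans hle ?_
  rw [hvol, ENNReal.toReal_mul, ENNReal.toReal_ofReal hc0.le]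

lemma durDiam_le_lip {M : Type*} [MetricSpace M] {K : Set ℝ} {γ : ℝ → M} {N : ℝ≥0}
    (hN : 1 ≤ N) (hKc : IsCompact K) (hγ : LipschitzOnWith N γ K)
    {C : Set ℝ} (hC : C.OrdConnected) :
    durDiam (γ '' (K ∩ C)) ≤ (N : ℝ≥0∞) * volume (C \ K) := by
  rw [durDiam]
  refine iSup₂_le fun x hx => iSup₂_le fun y hy => ?_
  obtain ⟨s, hs, rfl⟩ := hx
  obtain ⟨t, ht, rfl⟩ := hy
  have key : ∀ a b : ℝ, a ∈ K ∩ C → b ∈ K ∩ C → a ≤ b →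
      ENNReal.ofReal (dur (γ a) (γ b)) ≤ (N : ℝ≥0∞) * volume (C \ K) := by
    intro a b ha hb hab
    have h1 := dur_le_lip hN hKc hγ ha.1 hb.1 hab
    have hfin : volume (Icc a b \ K) ≠ ∞ :=
      (lt_of_le_of_lt (measure_mono diff_subset) measure_Icc_lt_top).ne
    calc ENNReal.ofReal (dur (γ a) (γ b))
        ≤ ENNReal.ofReal ((N : ℝ) * (volume (Icc a b \ K)).toReal) :=
          ENNReal.ofReal_le_ofReal h1
      _ = (N : ℝ≥0∞) * volume (Icc a b \ K) := by
          rw [ENNReal.ofReal_mul (NNReal.coe_nonneg N), ENNReal.ofReal_coe_nnreal,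
            ENNReal.ofReal_toReal hfin]
      _ ≤ (N : ℝ≥0∞) * volume (C \ K) := by
          gcongr
          exact hC.out ha.2 hb.2
  rcases le_total s t with h | h
  · exact key s t hs ht h
  · rw [dur_symm]
    exact key t s ht hs h

/-- Every curve fragment is collapsed by `d_ur` to a set which is null for the Hausdorff
1-measure computed with respect to `d_ur`: for every `ε > 0` the image `γ(K)` admits a
countable cover by sets whose `d_ur`-diameters sum to less than `ε`. -/
theorem curveFragment_durNull {M : Type*} [MetricSpace M]
    (K : Set ℝ) (γ : ℝ → M) (L : ℝ≥0)
    (hK : K.Nonempty) (hKc : IsCompact K) (hγ : LipschitzOnWith L γ K) :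
    ∀ ε : ℝ, 0 < ε → ∃ E : ℕ → Set M, γ '' K ⊆ ⋃ i, E i ∧
      ∑' i, durDiam (E i) < ENNReal.ofReal ε := by
  intro ε hε
  classical
  set N : ℝ≥0 := max L 1 with hNdef
  have hN1 : 1 ≤ N := le_max_right _ _
  have hNpos : (0 : ℝ) < N := lt_of_lt_of_le one_pos (by exact_mod_cast hN1)
  have hNne0 : (N : ℝ≥0∞) ≠ 0 := ENNReal.coe_ne_zero.mpr (by
    exact_mod_cast (lt_of_lt_of_le one_pos hN1).ne')
  have hγN : LipschitzOnWith N γ K := by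
    rw [lipschitzOnWith_iff_dist_le_mul]
    intro a ha b hb
    refine le_trans (lipschitzOnWith_iff_dist_le_mul.mp hγ a ha b hb) ?_
    have : (L : ℝ) ≤ (N : ℝ) := by exact_mod_cast le_max_left L 1
    exact mul_le_mul_of_nonneg_right this dist_nonneg
  set ε' : ℝ≥0∞ := ENNReal.ofReal (ε / N) with hε'def
  have hε'0 : ε' ≠ 0 := (ENNReal.ofReal_pos.mpr (div_pos hε hNpos)).ne'
  obtain ⟨U, hKU, hUo, hUfin, hUK⟩ :=
    hKc.isClosed.measurableSet.exists_isOpen_diff_lt (μ := volume) hKc.measure_lt_top.ne hε'0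
  obtain ⟨t, ht⟩ := hKc.elim_finite_subcover (fun x : ℝ => connectedComponentIn U x)
    (fun _ => hUo.connectedComponentIn)
    (fun x hx => mem_iUnion.2 ⟨x, mem_connectedComponentIn (hKU hx)⟩)
  set S : Finset (Set ℝ) := t.image (fun x => connectedComponentIn U x) with hSdef
  have hSsub : ∀ c ∈ S, c ⊆ U := by
    intro c hc; rw [hSdef] at hc; obtain ⟨x, -, rfl⟩ := Finset.mem_image.mp hc
    exact connectedComponentIn_subset U x
  have hSord : ∀ c ∈ S, c.OrdConnected := by
    intro c hc; rw [hSdef] at hc; obtain ⟨x, -, rfl⟩ := Finset.mem_image.mp hc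
    exact isPreconnected_connectedComponentIn.ordConnected
  have hSopen : ∀ c ∈ S, IsOpen c := by
    intro c hc; rw [hSdef] at hc; obtain ⟨x, -, rfl⟩ := Finset.mem_image.mp hc
    exact hUo.connectedComponentIn
  have hSdisj : (↑S : Set (Set ℝ)).PairwiseDisjoint (fun c => c \ K) := by
    intro c hc d hd hne
    rw [Finset.mem_coe, hSdef] at hc hd
    obtain ⟨x, -, rfl⟩ := Finset.mem_image.mp hc
    obtain ⟨y, -, rfl⟩ := Finset.mem_image.mp hd
    refine Disjoint.mono diff_subset diff_subset ?_
    rw [Set.disjoint_left]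
    intro z hz1 hz2
    exact hne (by rw [connectedComponentIn_eq hz1, ← connectedComponentIn_eq hz2])
  set n := S.card with hndef
  set e := S.equivFin with hedef
  set E : ℕ → Set M := fun i => if h : i < n then γ '' (K ∩ (e.symm ⟨i, h⟩ : Set ℝ)) else ∅
    with hEdef
  refine ⟨E, ?_, ?_⟩
  · rintro _ ⟨z, hz, rfl⟩
    obtain ⟨w, hw, hzw⟩ := Set.mem_iUnion₂.mp (ht hz)
    have hcS : connectedComponentIn U w ∈ S := by
      rw [hSdef]; exact Finset.mem_image_of_mem _ hw
    have h1 : ((e ⟨_, hcS⟩ : Fin n)).1 < n := (e ⟨_, hcS⟩).2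
    refine mem_iUnion.2 ⟨(e ⟨_, hcS⟩ : Fin n).1, ?_⟩
    have hEeq : E (e ⟨_, hcS⟩ : Fin n).1 = γ '' (K ∩ (e.symm ⟨(e ⟨_, hcS⟩ : Fin n).1, h1⟩ : Set ℝ)) := by
      simp only [hEdef]
      rw [dif_pos h1]
    rw [hEeq]
    have h2 : (e.symm ⟨(e ⟨_, hcS⟩ : Fin n).1, h1⟩ : Set ℝ) = connectedComponentIn U w := by
      have : (⟨(e ⟨_, hcS⟩ : Fin n).1, h1⟩ : Fin n) = e ⟨_, hcS⟩ := rfl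
      rw [this, e.symm_apply_apply]
    rw [h2]
    exact ⟨z, ⟨hz, hzw⟩, rfl⟩
  · have hzero : ∀ i ∉ Finset.range n, durDiam (E i) = 0 := by
      intro i hi
      rw [Finset.mem_range, not_lt] at hi
      have hempty : E i = ∅ := by simp only [hEdef]; rw [dif_neg (by omega)]
      rw [hempty]
      simp [durDiam]
    rw [tsum_eq_sum hzero]
    have hstep : ∀ i : Fin n, durDiam (E i.1) = durDiam (γ '' (K ∩ (e.symm i : Set ℝ))) := by
      intro i
      simp only [hEdef]
      rw [dif_pos i.2]
    calc ∑ i ∈ Finset.range n, durDiam (E i)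
        = ∑ i : Fin n, durDiam (E i.1) := (Fin.sum_univ_eq_sum_range (fun i => durDiam (E i)) n).symm
      _ = ∑ c : {x // x ∈ S}, durDiam (γ '' (K ∩ (c : Set ℝ))) := by
          rw [← Equiv.sum_comp e.symm (fun c => durDiam (γ '' (K ∩ (c : Set ℝ))))]
          exact Finset.sum_congr rfl fun i _ => hstep i
      _ = ∑ c ∈ S, durDiam (γ '' (K ∩ c)) :=
          Finset.sum_coe_sort S (fun c => durDiam (γ '' (K ∩ c)))
      _ ≤ ∑ c ∈ S, (N : ℝ≥0∞) * volume (c \ K) :=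
          Finset.sum_le_sum fun c hc => durDiam_le_lip hN1 hKc hγN (hSord c hc)
      _ = (N : ℝ≥0∞) * ∑ c ∈ S, volume (c \ K) := (Finset.mul_sum _ _ _).symm
      _ = (N : ℝ≥0∞) * volume (⋃ c ∈ S, c \ K) := by
          rw [measure_biUnion_finset hSdisj
            (fun c hc => ((hSopen c hc).measurableSet).diff hKc.isClosed.measurableSet)]
      _ ≤ (N : ℝ≥0∞) * volume (U \ K) := by
          gcongr
          exact iUnion₂_subset fun c hc => diff_subset_diff_left (hSsub c hc)
      _ < (N : ℝ≥0∞) * ε' := by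
          rw [ENNReal.mul_lt_mul_iff_right hNne0 ENNReal.coe_ne_top]
          exact hUK
      _ ≤ ENNReal.ofReal ε := by
          rw [hε'def, ← ENNReal.ofReal_coe_nnreal, ← ENNReal.ofReal_mul (NNReal.coe_nonneg N),
            mul_comm, div_mul_cancel₀ ε hNpos.ne']
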